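/- Let G be a group and σ an involutive anti-automorphism of G. Let δ > 0 and f, g : G → ℂ satisfy |f(x*y) + f(x*σ(y)) − 2·f(x)·g(y)| ≤ δ for all x, y ∈ G. If g is unbounded and f ≠ 0, then f satisfies f(x*y) + f(x*σ(y)) = 2·f(x)·g(y) for all x, y, and moreover g satisfies g(x*y) + g(y*x) + g(σ(y)*x) + g(x*σ(y)) = 4·g(x)·g(y) for all x, y. -/

import Mathlib

/-!
Write `W x y = f (x y) + f (x σ y) - 2 f(x) g(y)` for the Wilson defect, which is bounded by `δ`,
and `D y z = g (y z) + g (y σ z) + g (σ y z) + g (σ y σ z) - 4 g(y) g(z)`.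
Expanding with `σ (y z) = σ z σ y` gives the exact identity
`2 f(x) D(y, z) - 2 g(z) W(x, y) = (eight Wilson defects) + 2 g(y) W(x, z)`,
whose right-hand side is bounded for fixed `y`. Since `g` is unbounded and `f(x₀) ≠ 0`,
the inequality at `x₀` forces `f` to be unbounded; letting `f(x)` grow in the identity gives `D = 0`,
and then letting `g(z)` grow gives `W = 0`. Finally `W = 0` at `x₀` shows `g ∘ σ = g`,
which turns `D = 0` into the stated equation for `g`.
-/

lemma nonpos_of_forall_mul_le_of_unbounded {α : Type*} {u : α → ℝ} (hu : ∀ M : ℝ, ∃ t, M < u t)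
    {c K : ℝ} (h : ∀ t, u t * c ≤ K) : c ≤ 0 := by
  by_contra! hc
  obtain ⟨t, ht⟩ := hu (K / c)
  rw [div_lt_iff₀ hc] at ht
  linarith [h t]

section Defects

variable {G R : Type*}

def wilsonDefect [Mul G] [CommRing R] (σ : G → G) (f g : G → R) (x y : G) : R :=
  f (x * y) + f (x * σ y) - 2 * f x * g y

def dAlembertDefect [Mul G] [CommRing R] (σ : G → G) (g : G → R) (y z : G) : R :=
  g (y * z) + g (y * σ z) + g (σ y * z) + g (σ y * σ z) - 4 * g y * g z

lemma exists_lt_norm_of_norm_wilsonDefect_le [Mul G] {σ : G → G} {f g : G → ℂ} {δ : ℝ}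
    (hW : ∀ x y, ‖wilsonDefect σ f g x y‖ ≤ δ) (hg : ∀ M : ℝ, ∃ z, M < ‖g z‖)
    {x₀ : G} (hx₀ : f x₀ ≠ 0) (M : ℝ) : ∃ x, M < ‖f x‖ := by
  by_contra! hM
  have hnonpos : 2 * ‖f x₀‖ ≤ 0 :=
    nonpos_of_forall_mul_le_of_unbounded hg (K := 2 * M + δ) fun z => by
      have hsplit : 2 * f x₀ * g z = f (x₀ * z) + f (x₀ * σ z) - wilsonDefect σ f g x₀ z := by
        rw [wilsonDefect]
        ring
      have := norm_sub_le (f (x₀ * z) + f (x₀ * σ z)) (wilsonDefect σ f g x₀ z)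
      rw [← hsplit, norm_mul, norm_mul, Complex.norm_two] at this
      linarith [norm_add_le (f (x₀ * z)) (f (x₀ * σ z)), hM (x₀ * z), hM (x₀ * σ z), hW x₀ z]
  linarith [norm_pos_iff.mpr hx₀]

lemma apply_eq_of_wilsonDefect_eq_zero [Mul G] [CommRing R] [NoZeroDivisors R] [NeZero (2 : R)]
    {σ : G → G} (hinv : ∀ x : G, σ (σ x) = x) {f g : G → R}
    (hW : ∀ x y, wilsonDefect σ f g x y = 0) {x₀ : G} (hx₀ : f x₀ ≠ 0) (y : G) :
    g (σ y) = g y := by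
  have hσy := hW x₀ (σ y)
  have hy := hW x₀ y
  simp only [wilsonDefect, hinv] at hσy hy
  have : 2 * f x₀ * (g (σ y) - g y) = 0 := by linear_combination hy - hσy
  exact sub_eq_zero.mp ((mul_eq_zero.mp this).resolve_left (mul_ne_zero two_ne_zero hx₀))

variable [Semigroup G] {σ : G → G}

-- The sixteen values of `f` at triple products cancel in pairs.
lemma two_mul_dAlembertDefect_sub [CommRing R] (hanti : ∀ x y : G, σ (x * y) = σ y * σ x)
    (hinv : ∀ x : G, σ (σ x) = x) (f g : G → R) (x y z : G) :
    2 * f x * dAlembertDefect σ g y z - 2 * g z * wilsonDefect σ f g x y =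
      (wilsonDefect σ f g (x * y) z + wilsonDefect σ f g (x * σ y) z
        + wilsonDefect σ f g (x * z) y + wilsonDefect σ f g (x * σ z) y)
      - (wilsonDefect σ f g x (y * z) + wilsonDefect σ f g x (y * σ z)
        + wilsonDefect σ f g x (σ y * z) + wilsonDefect σ f g x (σ y * σ z))
      + 2 * g y * wilsonDefect σ f g x z := by
  simp only [wilsonDefect, dAlembertDefect, hanti, hinv, mul_assoc]
  ring

variable (hanti : ∀ x y : G, σ (x * y) = σ y * σ x) (hinv : ∀ x : G, σ (σ x) = x)
  {f g : G → ℂ} {δ : ℝ} (hW : ∀ x y, ‖wilsonDefect σ f g x y‖ ≤ δ)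
include hanti hinv hW

lemma norm_two_mul_dAlembertDefect_sub_le (x y z : G) :
    ‖2 * f x * dAlembertDefect σ g y z - 2 * g z * wilsonDefect σ f g x y‖
      ≤ 8 * δ + 2 * ‖g y‖ * δ := by
  rw [two_mul_dAlembertDefect_sub hanti hinv]
  have h₁ := norm_add₄_le (a := wilsonDefect σ f g (x * y) z) (b := wilsonDefect σ f g (x * σ y) z)
    (c := wilsonDefect σ f g (x * z) y) (d := wilsonDefect σ f g (x * σ z) y)
  have h₂ := norm_add₄_le (a := wilsonDefect σ f g x (y * z)) (b := wilsonDefect σ f g x (y * σ z))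
    (c := wilsonDefect σ f g x (σ y * z)) (d := wilsonDefect σ f g x (σ y * σ z))
  have h₃ : ‖2 * g y * wilsonDefect σ f g x z‖ ≤ 2 * ‖g y‖ * δ := by
    rw [norm_mul, norm_mul, Complex.norm_two]
    gcongr
    exact hW x z
  refine (norm_add_le _ _).trans ((add_le_add (norm_sub_le _ _) le_rfl).trans ?_)
  linarith [hW (x * y) z, hW (x * σ y) z, hW (x * z) y, hW (x * σ z) y,
    hW x (y * z), hW x (y * σ z), hW x (σ y * z), hW x (σ y * σ z)]

lemma dAlembertDefect_eq_zero (hf : ∀ M : ℝ, ∃ x, M < ‖f x‖) (y z : G) :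
    dAlembertDefect σ g y z = 0 := by
  have hnonpos : 2 * ‖dAlembertDefect σ g y z‖ ≤ 0 :=
    nonpos_of_forall_mul_le_of_unbounded hf (K := 8 * δ + 2 * ‖g y‖ * δ + 2 * ‖g z‖ * δ)
      fun x => by
        have hWxy : ‖2 * g z * wilsonDefect σ f g x y‖ ≤ 2 * ‖g z‖ * δ := by
          rw [norm_mul, norm_mul, Complex.norm_two]
          gcongr
          exact hW x y
        have := norm_le_norm_add_norm_sub' (2 * f x * dAlembertDefect σ g y z)
          (2 * g z * wilsonDefect σ f g x y)
        rw [norm_mul, norm_mul, Complex.norm_two] at this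
        linarith [norm_two_mul_dAlembertDefect_sub_le hanti hinv hW x y z]
  exact norm_le_zero_iff.mp (by linarith [norm_nonneg (dAlembertDefect σ g y z)])

lemma wilsonDefect_eq_zero (hg : ∀ M : ℝ, ∃ z, M < ‖g z‖)
    (hD : ∀ y z, dAlembertDefect σ g y z = 0) (x y : G) : wilsonDefect σ f g x y = 0 := by
  have hnonpos : 2 * ‖wilsonDefect σ f g x y‖ ≤ 0 :=
    nonpos_of_forall_mul_le_of_unbounded hg (K := 8 * δ + 2 * ‖g y‖ * δ) fun z => by
      have := norm_two_mul_dAlembertDefect_sub_le hanti hinv hW x y z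
      rw [hD, mul_zero, zero_sub, norm_neg, norm_mul, norm_mul, Complex.norm_two] at this
      linarith
  exact norm_le_zero_iff.mp (by linarith [norm_nonneg (wilsonDefect σ f g x y)])

end Defects

theorem stmt_5_general (G : Type*) [Group G] (σ : G → G)
    (hanti : ∀ x y : G, σ (x * y) = σ y * σ x) (hinv : ∀ x : G, σ (σ x) = x)
    (δ : ℝ) (f g : G → ℂ)
    (h : ∀ x y : G, ‖f (x * y) + f (x * σ y) - 2 * f x * g y‖ ≤ δ)
    (hg : ∀ M : ℝ, ∃ z : G, M < ‖g z‖) (hf : f ≠ 0) :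
    (∀ x y : G, f (x * y) + f (x * σ y) = 2 * f x * g y) ∧
    (∀ x y : G, g (x * y) + g (y * x) + g (σ y * x) + g (x * σ y) = 4 * g x * g y) := by
  obtain ⟨x₀, hx₀⟩ : ∃ x₀, f x₀ ≠ 0 := Function.ne_iff.mp hf
  have hW : ∀ x y, ‖wilsonDefect σ f g x y‖ ≤ δ := h
  have hD := dAlembertDefect_eq_zero hanti hinv hW
    (exists_lt_norm_of_norm_wilsonDefect_le hW hg hx₀)
  have hW₀ := wilsonDefect_eq_zero hanti hinv hW hg hD
  have hgσ := apply_eq_of_wilsonDefect_eq_zero hinv hW₀ hx₀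
  refine ⟨fun x y => sub_eq_zero.mp (hW₀ x y), fun x y => ?_⟩
  have hxy := hD x y
  rw [dAlembertDefect, ← hgσ (σ x * y), ← hgσ (σ x * σ y), hanti, hanti, hinv, hinv] at hxy
  linear_combination hxy

theorem stmt_5 (G : Type*) [Group G] (σ : G → G)
    (hanti : ∀ x y : G, σ (x * y) = σ y * σ x) (hinv : ∀ x : G, σ (σ x) = x)
    (δ : ℝ) (hδ : 0 < δ) (f g : G → ℂ)
    (h : ∀ x y : G, ‖f (x * y) + f (x * σ y) - 2 * f x * g y‖ ≤ δ)
    (hg : ∀ M : ℝ, ∃ z : G, M < ‖g z‖) (hf : f ≠ 0) :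
    (∀ x y : G, f (x * y) + f (x * σ y) = 2 * f x * g y) ∧
    (∀ x y : G, g (x * y) + g (y * x) + g (σ y * x) + g (x * σ y) = 4 * g x * g y) :=
  stmt_5_general G σ hanti hinv δ f g h hg hf
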